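/- Let p be an odd prime and let w ∈ K satisfy w^{p^m} = 1 for some integer m ≥ 0. Then for every integer n ≥ 0 the twisted Euler number E_{n,w} := lim_{N→∞} Σ_{a=0}^{p^N−1} (−1)^a w^a a^n exists in K (Witt's formula E_{n,w} = ∫_{ℤ_p} t^n w^t dμ₋₁(t)), and these numbers satisfy, for every n ≥ 0, w · Σ_{j=0}^{n} C(n,j) E_{j,w} + E_{n,w} = 2 if n = 0 and = 0 if n ≥ 1 (equivalently, Σ_{n≥0} E_{n,w} z^n/n! = 2/(w e^z + 1) as a generating-function identity). -/

import Mathlib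

open Filter Finset

/-!
Write `S_n(M) = ∑_{a<M} (-1)^a w^a a^n`. Cutting `range (p * p^N)` into `p` blocks of length
`p^N` and using `(-1)^{p^N} = -1`, `w^{p^N} = 1` (for `N ≥ m`) and `∑_{i<p} (-1)^i = 1`, the
difference `S_n(p^{N+1}) - S_n(p^N)` becomes a sum of terms `(i p^N + b)^n - b^n`, each divisible
by `p^N`; in the ultrametric norm it is therefore at most `|p|^N`, so `S_n(p^N)` is Cauchy.
The recurrence already holds for the partial sums up to a boundary term: the shift `a ↦ a + 1`
makes `w ∑_j C(n,j) S_j(M)` telescope against `S_n(M)`, leaving `0^n + M^n` for `M = p^N`, and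
`(p^N)^n → 0^n`.
-/

theorem Finset.sum_range_mul_eq_sum_sum {M : Type*} [AddCommMonoid M] (f : ℕ → M) (c d : ℕ) :
    ∑ a ∈ range (c * d), f a = ∑ i ∈ range c, ∑ b ∈ range d, f (i * d + b) := by
  induction c with
  | zero => simp
  | succ c ih => rw [Nat.succ_mul, sum_range_add, ih, sum_range_succ]

theorem pow_pow_eq_one_of_le {M : Type*} [Monoid M] {w : M} {p m N : ℕ} (hw : w ^ p ^ m = 1)
    (hN : m ≤ N) : w ^ p ^ N = 1 :=
  orderOf_dvd_iff_pow_eq_one.mp ((orderOf_dvd_iff_pow_eq_one.mpr hw).trans (pow_dvd_pow p hN))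

section CommRing

variable {R : Type*} [CommRing R]

def twistedEulerSum (w : R) (n M : ℕ) : R :=
  ∑ a ∈ range M, (-1) ^ a * w ^ a * (a : R) ^ n

theorem twistedEulerSum_recurrence (w : R) (n M : ℕ) :
    w * ∑ j ∈ range (n + 1), (n.choose j : R) * twistedEulerSum w j M + twistedEulerSum w n M
      = 0 ^ n - (-1) ^ M * w ^ M * (M : R) ^ n := by
  set g : ℕ → R := fun b => (-1) ^ b * w ^ b * (b : R) ^ n
  have hshift : w * ∑ j ∈ range (n + 1), (n.choose j : R) * twistedEulerSum w j M
      = -∑ a ∈ range M, g (a + 1) := by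
    simp only [twistedEulerSum, mul_sum, ← sum_neg_distrib, g]
    rw [sum_comm]
    refine sum_congr rfl fun a _ => ?_
    rw [Nat.cast_succ, add_pow, mul_sum, ← sum_neg_distrib]
    exact sum_congr rfl fun j _ => by ring
  have htelescope := sum_range_succ' g M
  rw [sum_range_succ] at htelescope
  rw [hshift, twistedEulerSum]
  simp only [g, pow_zero, Nat.cast_zero, one_mul] at htelescope
  linear_combination htelescope

theorem twistedEulerSum_mul_sub {w : R} {n c d : ℕ} (hc : Odd c) (hd : Odd d) (hw : w ^ d = 1) :
    twistedEulerSum w n (c * d) - twistedEulerSum w n d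
      = ∑ i ∈ range c, (-1) ^ i *
          ∑ b ∈ range d, (-1) ^ b * w ^ b * (((i * d + b : ℕ) : R) ^ n - (b : R) ^ n) := by
  have hblock : twistedEulerSum w n (c * d) = ∑ i ∈ range c, (-1) ^ i *
      ∑ b ∈ range d, (-1) ^ b * w ^ b * ((i * d + b : ℕ) : R) ^ n := by
    rw [twistedEulerSum, sum_range_mul_eq_sum_sum]
    refine sum_congr rfl fun i _ => ?_
    rw [mul_sum]
    refine sum_congr rfl fun b _ => ?_
    rw [pow_add, pow_add, pow_mul', pow_mul', hd.neg_one_pow, hw, one_pow]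
    ring
  have hsign : ∑ i ∈ range c, (-1 : R) ^ i = 1 := by
    rw [neg_one_geom_sum, if_neg (Nat.not_even_iff_odd.mpr hc)]
  have hsplit : twistedEulerSum w n d = ∑ i ∈ range c, (-1) ^ i * twistedEulerSum w n d := by
    rw [← sum_mul, hsign, one_mul]
  rw [hblock, hsplit, ← sum_sub_distrib]
  refine sum_congr rfl fun i _ => ?_
  rw [twistedEulerSum, ← mul_sub, ← sum_sub_distrib]
  simp only [mul_sub]

theorem twistedEulerSum_recurrence_of_pow_eq_one {w : R} {n M : ℕ} (hM : Odd M)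
    (hw : w ^ M = 1) :
    w * ∑ j ∈ range (n + 1), (n.choose j : R) * twistedEulerSum w j M + twistedEulerSum w n M
      = 0 ^ n + (M : R) ^ n := by
  rw [twistedEulerSum_recurrence, hM.neg_one_pow, hw]
  ring

end CommRing

section NormedField

variable {K : Type*} [NormedField K]

theorem norm_intCast_pow_sub_pow_le (hint : ∀ k : ℤ, ‖(k : K)‖ ≤ 1) (x y : ℤ) (n : ℕ) :
    ‖(x : K) ^ n - (y : K) ^ n‖ ≤ ‖((x - y : ℤ) : K)‖ := by
  obtain ⟨k, hk⟩ := sub_dvd_pow_sub_pow x y n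
  have hcast : (x : K) ^ n - (y : K) ^ n = ((x - y : ℤ) : K) * (k : K) := by
    simpa using congrArg (Int.cast : ℤ → K) hk
  rw [hcast, norm_mul]
  exact mul_le_of_le_one_right (norm_nonneg _) (hint k)

theorem norm_twistedEulerSum_mul_sub_le [IsUltrametricDist K] (hint : ∀ k : ℤ, ‖(k : K)‖ ≤ 1)
    {w : K} {n c d : ℕ} (hc : Odd c) (hd : Odd d) (hw : w ^ d = 1) :
    ‖twistedEulerSum w n (c * d) - twistedEulerSum w n d‖ ≤ ‖(d : K)‖ := by
  have hw_norm : ‖w‖ = 1 :=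
    (isOfFinOrder_iff_pow_eq_one.mpr ⟨d, hd.pos, hw⟩).norm_eq_one
  rw [twistedEulerSum_mul_sub hc hd hw]
  refine IsUltrametricDist.norm_sum_le_of_forall_le_of_nonneg (norm_nonneg _) fun i _ => ?_
  rw [norm_mul, norm_pow, norm_neg, norm_one, one_pow, one_mul]
  refine IsUltrametricDist.norm_sum_le_of_forall_le_of_nonneg (norm_nonneg _) fun b _ => ?_
  rw [norm_mul, norm_mul, norm_pow, norm_pow, norm_neg, norm_one, one_pow, hw_norm, one_pow,
    one_mul, one_mul]
  calc ‖((i * d + b : ℕ) : K) ^ n - (b : K) ^ n‖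
      = ‖(((i * d + b : ℕ) : ℤ) : K) ^ n - ((b : ℤ) : K) ^ n‖ := by push_cast; rfl
    _ ≤ ‖(((i * d + b : ℕ) - b : ℤ) : K)‖ := norm_intCast_pow_sub_pow_le hint _ _ n
    _ = ‖(i : K)‖ * ‖(d : K)‖ := by push_cast; rw [add_sub_cancel_right, norm_mul]
    _ ≤ ‖(d : K)‖ := mul_le_of_le_one_left (norm_nonneg _) (by exact_mod_cast hint i)

theorem cauchySeq_twistedEulerSum_pow [IsUltrametricDist K] (hint : ∀ k : ℤ, ‖(k : K)‖ ≤ 1)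
    {p : ℕ} (hp : Odd p) (hpK : ‖(p : K)‖ < 1) {w : K} {m : ℕ} (hw : w ^ p ^ m = 1) (n : ℕ) :
    CauchySeq fun N => twistedEulerSum w n (p ^ N) := by
  refine NonarchimedeanAddGroup.cauchySeq_of_tendsto_sub_nhds_zero ?_
  refine squeeze_zero_norm' ?_ (tendsto_pow_atTop_nhds_zero_of_lt_one (norm_nonneg _) hpK)
  filter_upwards [eventually_ge_atTop m] with N hN
  rw [pow_succ', ← norm_pow, ← Nat.cast_pow]
  exact norm_twistedEulerSum_mul_sub_le hint hp hp.pow (pow_pow_eq_one_of_le hw hN)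

end NormedField

/-- For an odd prime `p` and `w ∈ K` with `w^{p^m} = 1`, the twisted
Euler numbers `E_{n,w} = lim_N ∑_{a<p^N} (−1)^a w^a a^n` exist (Witt's formula), and
satisfy `w · ∑_{j≤n} C(n,j) E_{j,w} + E_{n,w} = 2` if `n = 0` and `= 0` if `n ≥ 1`
(the coefficient form of `∑ E_{n,w} z^n/n! = 2/(w e^z + 1)`). -/
theorem twisted_euler_numbers_exist_and_recurrence
    {p : ℕ} [Fact p.Prime] (hp : Odd p)
    {K : Type*} [NontriviallyNormedField K] [CompleteSpace K] [IsUltrametricDist K]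
    [Algebra ℚ_[p] K] (halg : ∀ x : ℚ_[p], ‖algebraMap ℚ_[p] K x‖ = ‖x‖)
    (w : K) (m : ℕ) (hw : w ^ p ^ m = 1) :
    ∃ E : ℕ → K,
      (∀ n : ℕ, Tendsto (fun N : ℕ => ∑ a ∈ Finset.range (p ^ N),
          (-1 : K) ^ a * w ^ a * (a : K) ^ n) atTop (nhds (E n))) ∧
      (∀ n : ℕ, w * ∑ j ∈ Finset.range (n + 1), (n.choose j : K) * E j + E n
          = if n = 0 then 2 else 0) := by
  have hint (k : ℤ) : ‖(k : K)‖ ≤ 1 := by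
    rw [← map_intCast (algebraMap ℚ_[p] K), halg]
    exact Padic.norm_int_le_one k
  have hpK : ‖(p : K)‖ < 1 := by
    rw [← map_natCast (algebraMap ℚ_[p] K), halg]
    exact Padic.norm_p_lt_one
  choose E hE using fun n =>
    cauchySeq_tendsto_of_complete (cauchySeq_twistedEulerSum_pow hint hp hpK hw n)
  refine ⟨E, hE, fun n => tendsto_nhds_unique
    (((tendsto_finsetSum _ fun j _ => (hE j).const_mul _).const_mul w).add (hE n)) ?_⟩
  have hboundary : Tendsto (fun N => (0 : K) ^ n + ((p ^ N : ℕ) : K) ^ n) atTop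
      (nhds (if n = 0 then 2 else 0)) := by
    rcases n with _ | n
    · norm_num
    · simpa using (tendsto_pow_atTop_nhds_zero_of_norm_lt_one hpK).pow (n + 1)
  refine hboundary.congr' ?_
  filter_upwards [eventually_ge_atTop m] with N hN
  exact (twistedEulerSum_recurrence_of_pow_eq_one hp.pow (pow_pow_eq_one_of_le hw hN)).symm
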